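/- arXiv:2510.09373 — 3 statements merged into one kernel-verified Lean document; each statement's English description precedes it below -/
import Mathlib

section
/- Let s and S be duplicate-free lists with s a subsequence of S and with the same first element. Then for every element v of S, prev(v, s, S) is well defined, occurs in s, and satisfies prev(v, s, S) ⪯_S v; moreover, no element of s occurs strictly between prev(v, s, S) and v in S, i.e., there is no w occurring in s with prev(v, s, S) ≺_S w and w ≺_S v. -/
/-!
For `v ∉ s`, `prevList v s S` consists exactly of the elements of `s` that precede `v` in `S`,
and it is nonempty because it contains the common first element of `s` and `S`. Being a sublist
of the duplicate-free list `S`, on which `≺` is asymmetric, it has its last element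
`prev v s S` as a `≺_S`-maximum, so no element of `s` lies strictly between `prev v s S` and `v`.
-/

variable {V : Type*}

/-- `a` precedes `b` in `S`: `[a, b]` is a sublist of `S`. -/
def prec (a b : V) (S : List V) : Prop := [a, b].Sublist S

/-- `a ⪯_S b`: `a = b` or `a ≺_S b`. -/
def preceq (a b : V) (S : List V) : Prop := a = b ∨ prec a b S

/-- The prefix of `S` strictly before `v`, filtered to elements of `s`. -/
def prevList [DecidableEq V] (v : V) (s S : List V) : List V :=
  (S.takeWhile (· ≠ v)).filter (· ∈ s)

/-- `prev(v, s, S)`: `v` itself if `v` occurs in `s`, otherwise the last element of `s`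
occurring before `v` in `S`. -/
def prev [DecidableEq V] (v : V) (s S : List V) : V :=
  if v ∈ s then v else (prevList v s S).getLastD v

section Precedence

variable {a b v w x : V} {L S : List V}

theorem prec_cons_iff : prec a b (x :: S) ↔ (a = x ∧ b ∈ S) ∨ prec a b S := by
  simp only [prec, List.cons_sublist_cons', List.singleton_sublist]
  tauto

theorem prec.mem_right (h : prec a b S) : b ∈ S :=
  h.subset (by simp)

theorem prec.mono (h : prec a b L) (hLS : L.Sublist S) : prec a b S :=
  List.Sublist.trans h hLS

theorem prec_asymm (hS : S.Nodup) (hab : prec a b S) : ¬ prec b a S := by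
  induction S with
  | nil => exact absurd hab (by simp [prec])
  | cons x S ih =>
    intro hba
    have hx : x ∉ S := (List.nodup_cons.mp hS).1
    rcases prec_cons_iff.mp hab with ⟨rfl, -⟩ | hab_S <;>
      rcases prec_cons_iff.mp hba with ⟨rfl, ha⟩ | hba_S
    · exact hx ha
    · exact hx hba_S.mem_right
    · exact hx hab_S.mem_right
    · exact ih hS.of_cons hab_S hba_S

theorem prec_irrefl (hS : S.Nodup) : ¬ prec a a S :=
  fun h => prec_asymm hS h h

theorem prec_getLast_of_mem (hne : L ≠ []) (hw : w ∈ L) (hlast : w ≠ L.getLast hne) :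
    prec w (L.getLast hne) L := by
  have hw' : w ∈ L.dropLast := by
    rw [← List.dropLast_append_getLast hne, List.mem_append] at hw
    simpa [hlast] using hw
  have h := (List.singleton_sublist.mpr hw').append (List.Sublist.refl [L.getLast hne])
  rwa [List.dropLast_append_getLast hne] at h

theorem not_prec_getLast (hS : S.Nodup) (hLS : L.Sublist S) (hne : L ≠ []) (hw : w ∈ L) :
    ¬ prec (L.getLast hne) w S := by
  by_cases hlast : w = L.getLast hne
  · exact hlast ▸ prec_irrefl hS
  · exact prec_asymm hS ((prec_getLast_of_mem hne hw hlast).mono hLS)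

theorem prec_iff_mem_takeWhile [DecidableEq V] (hS : S.Nodup) (hv : v ∈ S) :
    prec w v S ↔ w ∈ S.takeWhile (· ≠ v) := by
  induction S with
  | nil => simp at hv
  | cons x S ih =>
    have hx : x ∉ S := (List.nodup_cons.mp hS).1
    by_cases hxv : x = v
    · subst hxv
      rw [List.takeWhile_cons_of_neg (by simp), prec_cons_iff]
      simp only [List.not_mem_nil, iff_false]
      rintro (⟨-, hx'⟩ | h)
      exacts [hx hx', hx h.mem_right]
    · have hvS : v ∈ S := (List.mem_cons.mp hv).resolve_left (Ne.symm hxv)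
      rw [List.takeWhile_cons_of_pos (by simpa using hxv), List.mem_cons, prec_cons_iff,
        ih hS.of_cons hvS]
      simp [hvS]

end Precedence

section Prev

variable [DecidableEq V] {s S : List V} {v w : V}

theorem prevList_sublist : (prevList v s S).Sublist S :=
  List.filter_sublist.trans (List.takeWhile_sublist _)

theorem mem_prevList_iff (hS : S.Nodup) (hv : v ∈ S) :
    w ∈ prevList v s S ↔ w ∈ s ∧ prec w v S := by
  rw [prevList, List.mem_filter, prec_iff_mem_takeWhile hS hv, decide_eq_true_iff, and_comm]

theorem prevList_ne_nil (hS : S.Nodup) (hhead : s.head? = S.head?) (hv : v ∈ S) (hvs : v ∉ s) :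
    prevList v s S ≠ [] := by
  obtain ⟨b, S, rfl⟩ := List.exists_cons_of_ne_nil (List.ne_nil_of_mem hv)
  have hbs : b ∈ s := List.mem_of_mem_head? (hhead.trans rfl)
  have hvS : v ∈ S := (List.mem_cons.mp hv).resolve_left (fun h => hvs (h ▸ hbs))
  exact List.ne_nil_of_mem
    ((mem_prevList_iff hS hv).mpr ⟨hbs, prec_cons_iff.mpr (Or.inl ⟨rfl, hvS⟩)⟩)

theorem prev_eq_getLast (hvs : v ∉ s) (hne : prevList v s S ≠ []) :
    prev v s S = (prevList v s S).getLast hne := by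
  rw [prev, if_neg hvs, List.getLastD_eq_getLast?, List.getLast?_eq_some_getLast hne]
  rfl

end Prev

theorem prev_well_defined_general [DecidableEq V] (s S : List V)
    (hS : S.Nodup)
    (hhead : s.head? = S.head?) :
    ∀ v ∈ S,
      (v ∉ s → prevList v s S ≠ []) ∧
      prev v s S ∈ s ∧
      preceq (prev v s S) v S ∧
      ¬ ∃ w ∈ s, prec (prev v s S) w S ∧ prec w v S := by
  intro v hv
  by_cases hvs : v ∈ s
  · rw [prev, if_pos hvs]
    exact ⟨absurd hvs, hvs, Or.inl rfl, fun ⟨_, _, hvw, hwv⟩ => prec_asymm hS hvw hwv⟩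
  · have hne := prevList_ne_nil hS hhead hv hvs
    obtain ⟨hlast_s, hlast_v⟩ := (mem_prevList_iff hS hv).mp (List.getLast_mem hne)
    rw [prev_eq_getLast hvs hne]
    refine ⟨fun _ => hne, hlast_s, Or.inr hlast_v, ?_⟩
    rintro ⟨w, hws, hlast_w, hwv⟩
    exact not_prec_getLast hS prevList_sublist hne
      ((mem_prevList_iff hS hv).mpr ⟨hws, hwv⟩) hlast_w

theorem prev_well_defined [DecidableEq V] (s S : List V)
    (hs : s.Nodup) (hS : S.Nodup) (hsub : s.Sublist S)
    (hhead : s.head? = S.head?) :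
    ∀ v ∈ S,
      (v ∉ s → prevList v s S ≠ []) ∧
      prev v s S ∈ s ∧
      preceq (prev v s S) v S ∧
      ¬ ∃ w ∈ s, prec (prev v s S) w S ∧ prec w v S :=
  prev_well_defined_general s S hS hhead
end

section
/- Let S be a sequence (a duplicate-free list with first element α and last element ω), and let v1, v2, v3 be pairwise distinct nodes occurring in S with v2 ∉ {α, ω}. If S violates neither the NotBetween triple (α, v2, v1) nor the NotBetween triple (v3, v2, ω), then v1 ≺_S v2 and v2 ≺_S v3; that is, the two NotBetween restrictions force v2 to be visited between v1 and v3. -/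
variable {V : Type*}

/-- `S` violates the NotBetween triple `(v1, v2, v3)`. -/
def violates (S : List V) (t : V × V × V) : Prop := [t.1, t.2.1, t.2.2].Sublist S

/-- A sequence: duplicate-free list with first element `α` and last element `ω`. -/
def IsSeq (a w : V) (S : List V) : Prop :=
  S.Nodup ∧ S.head? = some a ∧ S.getLast? = some w

/-! Two distinct entries of a list always occur in one order or the other. If `v2` came before
`v1`, then α ≺ v2 ≺ v1, and because `S` has no duplicates these two pairs glue into the
forbidden sublist [α, v2, v1]; symmetrically, `v3` before `v2` would give [v3, v2, ω]. -/

namespace List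

variable {α : Type*} {l : List α} {a x y z : α}

theorem pair_sublist_or_pair_sublist_of_ne (hx : x ∈ l) (hy : y ∈ l) (hxy : x ≠ y) :
    [x, y] <+ l ∨ [y, x] <+ l := by
  induction l with
  | nil => simp at hx
  | cons c l ih =>
    rcases mem_cons.1 hx with rfl | hxl
    · exact .inl <| (singleton_sublist.2 <| (mem_cons.1 hy).resolve_left hxy.symm).cons_cons _
    rcases mem_cons.1 hy with rfl | hyl
    · exact .inr <| (singleton_sublist.2 hxl).cons_cons _
    exact (ih hxl hyl).imp (·.cons c) (·.cons c)

theorem Nodup.triple_sublist_of_pair_sublist (hl : l.Nodup) (hxy : [x, y] <+ l)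
    (hyz : [y, z] <+ l) : [x, y, z] <+ l := by
  induction l with
  | nil => simp at hxy
  | cons c l ih =>
    obtain ⟨hc, hl⟩ := nodup_cons.1 hl
    cases hxy with
    | cons _ hxy =>
      have hyz : [y, z] <+ l := by
        cases hyz with
        | cons _ h => exact h
        | cons_cons _ h => exact absurd (hxy.subset (by simp)) hc
      exact (ih hl hxy hyz).cons c
    | cons_cons _ hy =>
      cases hyz with
      | cons _ hyz => exact hyz.cons_cons _
      | cons_cons _ _ => exact absurd (singleton_sublist.1 hy) hc

theorem pair_sublist_of_head?_eq (hl : l.head? = some a) (hx : x ∈ l) (hxa : x ≠ a) :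
    [a, x] <+ l := by
  obtain ⟨l, rfl⟩ := head?_eq_some_iff.1 hl
  exact (singleton_sublist.2 <| (mem_cons.1 hx).resolve_left hxa).cons_cons _

theorem pair_sublist_of_getLast?_eq (hl : l.getLast? = some a) (hx : x ∈ l) (hxa : x ≠ a) :
    [x, a] <+ l := by
  rw [← head?_reverse] at hl
  simpa using (pair_sublist_of_head?_eq hl (mem_reverse.2 hx) hxa).reverse

end List

theorem notBetween_forces_between_general (a w : V)
    (S : List V) (hS : IsSeq a w S)
    (v1 v2 v3 : V) (h12 : v1 ≠ v2) (h23 : v2 ≠ v3)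
    (hv1 : v1 ∈ S) (hv2 : v2 ∈ S) (hv3 : v3 ∈ S)
    (hv2a : v2 ≠ a) (hv2w : v2 ≠ w)
    (h1 : ¬ violates S (a, v2, v1)) (h2 : ¬ violates S (v3, v2, w)) :
    prec v1 v2 S ∧ prec v2 v3 S := by
  obtain ⟨hnd, hhead, hlast⟩ := hS
  refine ⟨?_, ?_⟩
  · refine (List.pair_sublist_or_pair_sublist_of_ne hv1 hv2 h12).resolve_right fun h21 => h1 ?_
    exact hnd.triple_sublist_of_pair_sublist (List.pair_sublist_of_head?_eq hhead hv2 hv2a) h21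
  · refine (List.pair_sublist_or_pair_sublist_of_ne hv2 hv3 h23).resolve_right fun h32 => h2 ?_
    exact hnd.triple_sublist_of_pair_sublist h32 (List.pair_sublist_of_getLast?_eq hlast hv2 hv2w)

theorem notBetween_forces_between (a w : V) (haw : a ≠ w)
    (S : List V) (hS : IsSeq a w S)
    (v1 v2 v3 : V) (h12 : v1 ≠ v2) (h13 : v1 ≠ v3) (h23 : v2 ≠ v3)
    (hv1 : v1 ∈ S) (hv2 : v2 ∈ S) (hv3 : v3 ∈ S)
    (hv2a : v2 ≠ a) (hv2w : v2 ≠ w)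
    (h1 : ¬ violates S (a, v2, v1)) (h2 : ¬ violates S (v3, v2, w)) :
    prec v1 v2 S ∧ prec v2 v3 S :=
  notBetween_forces_between_general a w S hS v1 v2 v3 h12 h23 hv1 hv2 hv3 hv2a hv2w h1 h2
end

section
/- Let d : V → V → ℝ satisfy the triangle inequality, let srv : V → ℝ be nonnegative, and let a, b : V → ℝ be time-window bounds. Let S be a duplicate-free list containing nodes vi, vj, vk with vi ≺_S vj and vj ≺_S vk, and suppose Start : V → ℝ satisfies a v ≤ Start v ≤ b v for every v occurring in S, and Start u + srv u + d u w ≤ Start w for every pair of adjacent elements u, w of S. Then a vi + srv vi + d vi vj ≤ Start vj and Start vj ≤ b vk − srv vj − d vj vk. Consequently, if a vi + srv vi + d vi vj > b vj, or b vk − srv vj − d vj vk < a vj, or a vi + srv vi + d vi vj > b vk − srv vj − d vj vk, then no such assignment Start exists, so the TransitionTimes filtering rule that forbids placing vj between vi and vk under any of these three conditions is sound. -/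
/-!
Since service times are nonnegative and `d` satisfies the triangle inequality, the constraint
`Start u + srv u + d u w ≤ Start w` is transitive, so imposing it on consecutive visits of `S`
imposes it on any two visits in order. Together with the windows at `vi` and `vk` this bounds
`Start vj` from both sides, and each of the three filtering conditions contradicts these bounds
or the window at `vj`.
-/

variable {V : Type*}

namespace prec

variable {x y : V} {S : List V}

theorem left_mem (h : prec x y S) : x ∈ S := h.subset (by simp)

theorem right_mem (h : prec x y S) : y ∈ S := h.subset (by simp)

end prec

theorem List.IsChain.rel_of_prec {x y : V} {S : List V} {R : V → V → Prop} [Trans R R R]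
    (hS : S.IsChain R) (h : prec x y S) : R x y :=
  List.isChain_pair.mp (hS.sublist h)

theorem isTrans_start_add_srv_add_dist_le (d : V → V → ℝ)
    (htri : ∀ x y z : V, d x z ≤ d x y + d y z) (srv : V → ℝ) (hsrv : ∀ v, 0 ≤ srv v)
    (Start : V → ℝ) :
    IsTrans V (fun u w => Start u + srv u + d u w ≤ Start w) where
  trans u v w huv hvw := by linarith [htri u v w, hsrv v]

theorem transitionTimes_filtering_sound_general (d : V → V → ℝ)
    (htri : ∀ x y z : V, d x z ≤ d x y + d y z)
    (srv : V → ℝ) (hsrv : ∀ v, 0 ≤ srv v)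
    (a b : V → ℝ) (S : List V)
    (vi vj vk : V) (hij : prec vi vj S) (hjk : prec vj vk S)
    (Start : V → ℝ)
    (hwin : ∀ v ∈ S, a v ≤ Start v ∧ Start v ≤ b v)
    (hadj : S.Chain' (fun u w => Start u + srv u + d u w ≤ Start w)) :
    (a vi + srv vi + d vi vj ≤ Start vj ∧
      Start vj ≤ b vk - srv vj - d vj vk) ∧
    ((a vi + srv vi + d vi vj > b vj ∨
      b vk - srv vj - d vj vk < a vj ∨
      a vi + srv vi + d vi vj > b vk - srv vj - d vj vk) → False) := by
  have := isTrans_start_add_srv_add_dist_le d htri srv hsrv Start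
  have hij_time := hadj.rel_of_prec hij
  have hjk_time := hadj.rel_of_prec hjk
  have hi := hwin vi hij.left_mem
  have hj := hwin vj hij.right_mem
  have hk := hwin vk hjk.right_mem
  have hbounds : a vi + srv vi + d vi vj ≤ Start vj ∧ Start vj ≤ b vk - srv vj - d vj vk :=
    ⟨by linarith, by linarith⟩
  refine ⟨hbounds, ?_⟩
  rintro (h | h | h) <;> linarith

theorem transitionTimes_filtering_sound (d : V → V → ℝ)
    (htri : ∀ x y z : V, d x z ≤ d x y + d y z)
    (srv : V → ℝ) (hsrv : ∀ v, 0 ≤ srv v)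
    (a b : V → ℝ) (S : List V) (hS : S.Nodup)
    (vi vj vk : V) (hij : prec vi vj S) (hjk : prec vj vk S)
    (Start : V → ℝ)
    (hwin : ∀ v ∈ S, a v ≤ Start v ∧ Start v ≤ b v)
    (hadj : S.Chain' (fun u w => Start u + srv u + d u w ≤ Start w)) :
    (a vi + srv vi + d vi vj ≤ Start vj ∧
      Start vj ≤ b vk - srv vj - d vj vk) ∧
    ((a vi + srv vi + d vi vj > b vj ∨
      b vk - srv vj - d vj vk < a vj ∨
      a vi + srv vi + d vi vj > b vk - srv vj - d vj vk) → False) :=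
  transitionTimes_filtering_sound_general d htri srv hsrv a b S vi vj vk hij hjk Start hwin hadj
end
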